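/- arXiv:2310.05261 — 3 statements merged into one kernel-verified Lean document; each statement's English description precedes it below -/
import Mathlib

section
/- For all t ≥ 0, S(t) ⊆ S_s, where S(t) is the 0-superlevel set of the time-varying soft-maximum composite function h(·,t) and S_s is the safe set. -/
/-! Because of the shift by `log N / κ`, the soft maximum never exceeds the true maximum of its
arguments, so `h x t ≥ 0` forces one argument to be nonnegative. Each argument is either some `b j x`
or a convex combination of `b k x` and `b (k - N) x`, which is at most their maximum, so in every case
`0 ≤ b j x` for some `j`, i.e. `x ∈ S_j ⊆ S_s`. -/

noncomputable def softmax (N : ℕ) (κ : ℝ) (z : Fin N → ℝ) : ℝ :=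
  (1 / κ) * Real.log (∑ i : Fin N, Real.exp (κ * z i)) - Real.log N / κ

open Finset Real

theorem softmax_lt_of_forall_lt {N : ℕ} (hN : 0 < N) {κ : ℝ} (hκ : 0 < κ) {z : Fin N → ℝ}
    {c : ℝ} (hz : ∀ i, z i < c) : softmax N κ z < c := by
  have hne : (univ : Finset (Fin N)).Nonempty := univ_nonempty_iff.mpr ⟨⟨0, hN⟩⟩
  have hsum : ∑ i, exp (κ * z i) < N * exp (κ * c) :=
    calc ∑ i, exp (κ * z i) < ∑ _i : Fin N, exp (κ * c) :=
          sum_lt_sum_of_nonempty hne fun i _ => exp_lt_exp.mpr (mul_lt_mul_of_pos_left (hz i) hκ)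
      _ = N * exp (κ * c) := by simp
  have hlog : log (∑ i, exp (κ * z i)) < log N + κ * c := by
    rw [← log_exp (κ * c), ← log_mul (by positivity) (by positivity)]
    exact log_lt_log (sum_pos (fun i _ => exp_pos _) hne) hsum
  rw [softmax, sub_lt_iff_lt_add, one_div, inv_mul_eq_div, div_lt_iff₀ hκ, add_mul,
    div_mul_cancel₀ _ hκ.ne']
  linarith

theorem exists_le_of_le_softmax {N : ℕ} (hN : 0 < N) {κ : ℝ} (hκ : 0 < κ) {z : Fin N → ℝ}
    {c : ℝ} (hc : c ≤ softmax N κ z) : ∃ i, c ≤ z i := by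
  by_contra! hz
  exact (softmax_lt_of_forall_lt hN hκ hz).not_ge hc

theorem timevarying_softmax_safe_general (n N : ℕ) (hN : 1 ≤ N) (Ts κ : ℝ)
    (hκ : 0 < κ) (Ss : Set (Fin n → ℝ)) (b : ℤ → (Fin n → ℝ) → ℝ)
    (hb : ∀ k : ℤ, {x | 0 ≤ b k x} ⊆ Ss)
    (η : ℝ → ℝ) (hη : ∀ τ : ℝ, η τ ∈ Set.Icc (0:ℝ) 1)
    (h : (Fin n → ℝ) → ℝ → ℝ)
    (hh : ∀ (x : Fin n → ℝ) (t : ℝ), 0 ≤ t →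
      h x t = softmax N κ (fun i : Fin N =>
        if (i : ℕ) < N - 1 then b (⌊t / Ts⌋ - 1 - (i : ℕ)) x
        else η (t / Ts - ⌊t / Ts⌋) * b ⌊t / Ts⌋ x
          + (1 - η (t / Ts - ⌊t / Ts⌋)) * b (⌊t / Ts⌋ - N) x)) :
    ∀ t : ℝ, 0 ≤ t → {x : Fin n → ℝ | 0 ≤ h x t} ⊆ Ss := by
  intro t ht x (hx : 0 ≤ h x t)
  rw [hh x t ht] at hx
  obtain ⟨i, hi⟩ := exists_le_of_le_softmax hN hκ hx
  split_ifs at hi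
  · exact hb _ hi
  · set θ := η (t / Ts - ⌊t / Ts⌋)
    have hcombo : θ * b ⌊t / Ts⌋ x + (1 - θ) * b (⌊t / Ts⌋ - N) x
        ≤ max (b ⌊t / Ts⌋ x) (b (⌊t / Ts⌋ - N) x) :=
      Convex.combo_le_max _ _ (hη _).1 (sub_nonneg.mpr (hη _).2) (add_sub_cancel _ _)
    rcases le_max_iff.mp (hi.trans hcombo) with hnow | hpast
    · exact hb _ hnow
    · exact hb _ hpast

theorem timevarying_softmax_safe (n N : ℕ) (hN : 1 ≤ N) (Ts κ : ℝ) (hTs : 0 < Ts)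
    (hκ : 0 < κ) (Ss : Set (Fin n → ℝ)) (b : ℤ → (Fin n → ℝ) → ℝ)
    (hb : ∀ k : ℤ, {x | 0 ≤ b k x} ⊆ Ss)
    (η : ℝ → ℝ) (hη : ∀ τ : ℝ, η τ ∈ Set.Icc (0:ℝ) 1)
    (h : (Fin n → ℝ) → ℝ → ℝ)
    (hh : ∀ (x : Fin n → ℝ) (t : ℝ), 0 ≤ t →
      h x t = softmax N κ (fun i : Fin N =>
        if (i : ℕ) < N - 1 then b (⌊t / Ts⌋ - 1 - (i : ℕ)) x
        else η (t / Ts - ⌊t / Ts⌋) * b ⌊t / Ts⌋ x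
          + (1 - η (t / Ts - ⌊t / Ts⌋)) * b (⌊t / Ts⌋ - N) x)) :
    ∀ t : ℝ, 0 ≤ t → {x : Fin n → ℝ | 0 ≤ h x t} ⊆ Ss :=
  timevarying_softmax_safe_general n N hN Ts κ hκ Ss b hb η hη h hh
end

section
/- For the order-r smoothstep polynomial p(t) = t^{r+1} Σ_{j=0}^{r} C(r+j,j) C(2r+1, r-j) (-t)^j, all derivatives of order 1 through r vanish at t = 1. -/
noncomputable def smoothstepPoly (r : ℕ) (t : ℝ) : ℝ :=
  ∑ j ∈ Finset.range (r + 1),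
    (-1) ^ j * ((r + j).choose j : ℝ) * ((2 * r + 1).choose (r - j) : ℝ) * t ^ (r + 1 + j)

/-!
Differentiating `p` term by term and using
`(r+1+j) C(r+j,j) C(2r+1,r-j) = (r+1) C(2r+1,r) C(r,j)` gives
`p' = (r+1) C(2r+1,r) (t(1-t))^r`. Hence `(t-1)^r` divides `p'`, so the derivatives of `p'` of
order `< r` vanish at `1`.
-/

open Polynomial Finset

/-- Both sides equal `(2r+1)! / (r! j! (r-j)!)`. -/
theorem Nat.add_succ_mul_choose_mul_choose {r j : ℕ} (hj : j ≤ r) :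
    (r + 1 + j) * (r + j).choose j * (2 * r + 1).choose (r - j) =
      (r + 1) * (2 * r + 1).choose r * r.choose j := by
  have hpascal : (r + 1 + j) * (r + j).choose j = (r + 1 + j).choose (r + 1) * (r + 1) := by
    rw [choose_symm_add.symm, show r + 1 + j = r + j + 1 by omega, add_one_mul_choose_eq]
  have hsymm : (2 * r + 1).choose (r - j) = (2 * r + 1).choose (r + 1 + j) :=
    choose_symm_of_eq_add (by omega)
  have hmul := choose_mul (n := 2 * r + 1) (k := r + 1 + j) (Nat.le_add_right (r + 1) j)
  rw [show 2 * r + 1 - (r + 1) = r by omega, show r + 1 + j - (r + 1) = j by omega,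
    choose_symm_half] at hmul
  rw [hpascal, hsymm, mul_assoc (r + 1), ← hmul]
  ring

theorem Polynomial.iteratedDeriv_eval {𝕜 : Type*} [NontriviallyNormedField 𝕜] (p : 𝕜[X]) (n : ℕ) :
    iteratedDeriv n (fun x => p.eval x) = fun x => (derivative^[n] p).eval x := by
  induction n generalizing p with
  | zero => rfl
  | succ n ih =>
    have hderiv : (_root_.deriv fun x => p.eval x) = fun x => (derivative p).eval x := by
      ext x
      exact Polynomial.deriv p
    rw [iteratedDeriv_succ', hderiv, ih, Function.iterate_succ_apply]

theorem Polynomial.eval_iterate_derivative_eq_zero_of_pow_dvd {R : Type*} [CommRing R]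
    {p : R[X]} {a : R} {m n : ℕ} (h : (X - C a) ^ n ∣ p) (hm : m < n) :
    (derivative^[m] p).eval a = 0 :=
  dvd_iff_isRoot.mp <| (dvd_pow_self _ (Nat.sub_ne_zero_of_lt hm)).trans
    (pow_sub_dvd_iterate_derivative_of_pow_dvd m h)

theorem Polynomial.X_mul_one_sub_X_pow (R : Type*) [CommRing R] (r : ℕ) :
    ((X : R[X]) * (1 - X)) ^ r =
      ∑ j ∈ range (r + 1), C ((-1) ^ j * (r.choose j : R)) * X ^ (r + j) := by
  rw [mul_pow, sub_eq_neg_add, add_pow, mul_sum]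
  refine sum_congr rfl fun j _ => ?_
  rw [neg_pow]
  simp only [one_pow, mul_one, C_mul, map_pow, map_neg, map_one, map_natCast]
  ring

noncomputable def smoothstep (R : Type*) [CommRing R] (r : ℕ) : R[X] :=
  ∑ j ∈ range (r + 1),
    C ((-1) ^ j * ((r + j).choose j : R) * ((2 * r + 1).choose (r - j) : R)) * X ^ (r + 1 + j)

theorem smoothstepPoly_eq_eval (r : ℕ) : smoothstepPoly r = fun t => (smoothstep ℝ r).eval t := by
  ext t
  simp [smoothstep, smoothstepPoly, eval_finsetSum]

theorem derivative_smoothstep (R : Type*) [CommRing R] (r : ℕ) :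
    derivative (smoothstep R r) =
      C (((r + 1) * (2 * r + 1).choose r : ℕ) : R) * ((X : R[X]) * (1 - X)) ^ r := by
  rw [X_mul_one_sub_X_pow, mul_sum, smoothstep, derivative_sum]
  refine sum_congr rfl fun j hj => ?_
  have hjr : j ≤ r := Nat.lt_succ_iff.mp (mem_range.mp hj)
  rw [derivative_C_mul_X_pow, show r + 1 + j - 1 = r + j by omega, ← mul_assoc, ← C_mul]
  congr 2
  have hcoeff := congrArg (Nat.cast : ℕ → R) (Nat.add_succ_mul_choose_mul_choose hjr)
  push_cast at hcoeff ⊢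
  linear_combination (-1 : R) ^ j * hcoeff

theorem smoothstepPoly_iteratedDeriv_one_general (r : ℕ) :
    ∀ i : ℕ, 1 ≤ i → i ≤ r → iteratedDeriv i (smoothstepPoly r) 1 = 0 := by
  intro i hi hir
  obtain ⟨m, rfl⟩ := Nat.exists_eq_add_of_le' hi
  have hdvd : (X - C 1) ^ r ∣ derivative (smoothstep ℝ r) := by
    rw [derivative_smoothstep]
    exact (pow_dvd_pow_of_dvd (Dvd.intro (-X) (by rw [C_1]; ring)) r).mul_left _
  rw [smoothstepPoly_eq_eval, Polynomial.iteratedDeriv_eval, Function.iterate_succ_apply]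
  exact eval_iterate_derivative_eq_zero_of_pow_dvd hdvd (by omega)

theorem smoothstepPoly_iteratedDeriv_one (r : ℕ) (hr : 1 ≤ r) :
    ∀ i : ℕ, 1 ≤ i → i ≤ r → iteratedDeriv i (smoothstepPoly r) 1 = 0 :=
  smoothstepPoly_iteratedDeriv_one_general r
end

section
/- The derivative of the order-r smoothstep polynomial satisfies p'(t) = (2r+1) C(2r, r) t^r (1-t)^r. -/
/-! Differentiating termwise, the coefficient of `t ^ (r + j)` in `p'` is
`(-1) ^ j (r + 1 + j) C(r + j, j) C(2r + 1, r - j) = (-1) ^ j (2r + 1) C(2r, r) C(r, j)`,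
both products being `(2r + 1)! / (j! r! (r - j)!)`. Hence `p'(t) = (2r + 1) C(2r, r) t ^ r ∑ⱼ C(r, j) (-t) ^ j`,
the binomial expansion of `(2r + 1) C(2r, r) t ^ r (1 - t) ^ r`. -/

open Finset

theorem Nat.succ_add_mul_choose_mul_choose_sub {r j : ℕ} (hj : j ≤ r) :
    (r + 1 + j) * (r + j).choose j * (2 * r + 1).choose (r - j) =
      (2 * r + 1) * (2 * r).choose r * r.choose j := by
  have h₁ : 2 * r + 1 - (r - j) = r + j + 1 := by omega
  have h₂ : r + j - j = r := by omega
  have h₃ : 2 * r - r = r := by omega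
  qify
  rw [Nat.cast_choose ℚ le_add_self, Nat.cast_choose ℚ (show r - j ≤ 2 * r + 1 by omega),
    Nat.cast_choose ℚ (show r ≤ 2 * r by omega), Nat.cast_choose ℚ hj, h₁, h₂, h₃,
    Nat.factorial_succ (r + j), Nat.factorial_succ (2 * r)]
  push_cast
  field_simp
  ring

theorem hasDerivAt_smoothstepPoly (r : ℕ) (t : ℝ) :
    HasDerivAt (smoothstepPoly r)
      (∑ j ∈ range (r + 1), (-1) ^ j * ((r + j).choose j : ℝ) *
        ((2 * r + 1).choose (r - j) : ℝ) * ((r + 1 + j : ℕ) * t ^ (r + j))) t := by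
  unfold smoothstepPoly
  refine HasDerivAt.fun_sum fun j _ => HasDerivAt.const_mul _ ?_
  simpa using hasDerivAt_pow (r + 1 + j) t

theorem smoothstepPoly_deriv_general (r : ℕ) (t : ℝ) :
    deriv (smoothstepPoly r) t =
      (2 * r + 1 : ℝ) * ((2 * r).choose r : ℝ) * t ^ r * (1 - t) ^ r := by
  rw [(hasDerivAt_smoothstepPoly r t).deriv, show 1 - t = -t + 1 by ring, add_pow, mul_sum]
  refine sum_congr rfl fun j hj => ?_
  have hcoeff : ((r + 1 + j : ℕ) : ℝ) * (r + j).choose j * (2 * r + 1).choose (r - j) =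
      (2 * r + 1) * (2 * r).choose r * r.choose j := by
    exact_mod_cast Nat.succ_add_mul_choose_mul_choose_sub (Nat.lt_succ_iff.mp (mem_range.mp hj))
  linear_combination (-1) ^ j * t ^ (r + j) * hcoeff

theorem smoothstepPoly_deriv (r : ℕ) (hr : 1 ≤ r) (t : ℝ) :
    deriv (smoothstepPoly r) t =
      (2 * r + 1 : ℝ) * ((2 * r).choose r : ℝ) * t ^ r * (1 - t) ^ r :=
  smoothstepPoly_deriv_general r t
end
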